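/- arXiv:math/0702167 — 3 statements merged into one kernel-verified Lean document; each statement's English description precedes it below -/
import Mathlib

section
/- Let p be a nonzero harmonic polynomial on ℝ^n that is homogeneous of degree 2. Then the Lebesgue measure of the set {x ∈ B(0,1) : p(x) < 0} is at least c_n for some dimensional constant c_n > 0 depending only on n (in particular, the negativity set of any such polynomial in the unit ball has positive measure). -/
/-!
Homogeneity forces `p` to be the evaluation of the degree-2 homogeneous component `Q` of `P`, and
Euler's identity writes `Q` as `x ↦ ⟪x, T x⟫` with `T` half the Hessian of `Q`, which is symmetric
because partial derivatives commute. The Laplacian of this quadratic form is `2 tr T`, so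
harmonicity means `tr T = 0`. Let `λ` be the least eigenvalue of `T` and `v` a unit eigenvector:
since `T ≠ 0` and the eigenvalues sum to `0`, `λ < 0` and every eigenvalue is at most `(n - 1)(-λ)`,
which makes `⟪x, T x⟫ < 0` on the double cone `(n - 1)‖x‖² < n⟪v, x⟫²`. Its intersection with the
unit ball is a nonempty open set whose volume `c_n` does not depend on `v`, since a reflection
carries any unit vector to any other.
-/

open MeasureTheory Metric Real
noncomputable section

/-- The Laplacian of a function on Euclidean space. -/
def lap {n : ℕ} (u : EuclideanSpace ℝ (Fin n) → ℝ) (x : EuclideanSpace ℝ (Fin n)) : ℝ :=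
  ∑ i, fderiv ℝ (fun y => fderiv ℝ u y (EuclideanSpace.single i 1)) x (EuclideanSpace.single i 1)

open Finset MvPolynomial
open scoped InnerProductSpace Matrix

namespace MvPolynomial

variable {σ R : Type*}

theorem IsHomogeneous.eval_smul [CommSemiring R] {φ : MvPolynomial σ R} {m : ℕ}
    (hφ : φ.IsHomogeneous m) (t : R) (x : σ → R) : eval (t • x) φ = t ^ m * eval x φ := by
  conv_lhs => rw [φ.as_sum]
  conv_rhs => rw [φ.as_sum]
  simp only [map_sum, eval_monomial, mul_sum]
  refine sum_congr rfl fun d hd => ?_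
  simp only [Pi.smul_apply, smul_eq_mul, mul_pow, Finsupp.prod_mul]
  rw [Finsupp.prod, prod_pow_eq_pow_sum, ← hφ.degree_eq_sum_deg_support hd]
  ring

theorem eval_homogeneousComponent_of_eval_smul {K : Type*} [Field K] [LinearOrder K]
    [IsStrictOrderedRing K] (P : MvPolynomial σ K) (m : ℕ) (x : σ → K)
    (h : ∀ t : K, 0 < t → eval (t • x) P = t ^ m * eval x P) :
    eval x (homogeneousComponent m P) = eval x P := by
  -- `t ↦ eval (t • x) P` is the polynomial with coefficients `eval x (homogeneousComponent d P)`
  obtain ⟨q, hq_def⟩ : ∃ q : Polynomial K, q = ∑ d ∈ range (P.totalDegree + 1),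
      .C (eval x (homogeneousComponent d P)) * .X ^ d := ⟨_, rfl⟩
  have hq : ∀ t, q.eval t = eval (t • x) P := by
    intro t
    conv_rhs => rw [← P.sum_homogeneousComponent]
    simp only [hq_def, Polynomial.eval_finsetSum, map_sum,
      (homogeneousComponent_isHomogeneous _ P).eval_smul, Polynomial.eval_mul,
      Polynomial.eval_C, Polynomial.eval_pow, Polynomial.eval_X, mul_comm]
  have hq_eq : q = .C (eval x P) * .X ^ m := by
    refine Polynomial.eq_of_infinite_eval_eq _ _ ((Set.Ioi_infinite 0).mono fun t ht => ?_)
    rw [Set.mem_ofPred_eq, hq, h t ht, Polynomial.eval_mul, Polynomial.eval_C,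
      Polynomial.eval_pow, Polynomial.eval_X, mul_comm]
  have hm := congrArg (Polynomial.coeff · m) hq_eq
  simp only [hq_def, Polynomial.finsetSum_coeff, Polynomial.coeff_C_mul, Polynomial.coeff_X_pow,
    mul_ite, mul_one, mul_zero, sum_ite_eq, mem_range] at hm
  split_ifs at hm with hlt
  · exact hm
  · rwa [homogeneousComponent_eq_zero _ _ (by omega)]

theorem pderiv_pderiv_comm [CommSemiring R] (i j : σ) (φ : MvPolynomial σ R) :
    pderiv i (pderiv j φ) = pderiv j (pderiv i φ) := by
  induction φ using MvPolynomial.induction_on with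
  | C a => simp
  | add p q hp hq => simp [hp, hq]
  | mul_X p k h =>
    classical
    simp only [pderiv_mul, pderiv_X, map_add, h, Pi.single_apply]
    split_ifs <;> simp [add_right_comm]

def hessianAtZero [CommSemiring R] (φ : MvPolynomial σ R) : Matrix σ σ R :=
  Matrix.of fun i j => constantCoeff (pderiv j (pderiv i φ))

theorem hessianAtZero_transpose [CommSemiring R] (φ : MvPolynomial σ R) :
    (hessianAtZero φ)ᵀ = hessianAtZero φ := by
  ext i j
  simp [hessianAtZero, pderiv_pderiv_comm i j]

theorem IsHomogeneous.two_mul_eval_eq_dotProduct [CommSemiring R] [Fintype σ]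
    {φ : MvPolynomial σ R} (hφ : φ.IsHomogeneous 2) (x : σ → R) :
    2 * eval x φ = x ⬝ᵥ (hessianAtZero φ *ᵥ x) := by
  have hconst : ∀ i j, eval x (pderiv j (pderiv i φ)) = constantCoeff (pderiv j (pderiv i φ)) := by
    intro i j
    rw [totalDegree_eq_zero_iff_eq_C.mp
      ((totalDegree_zero_iff_isHomogeneous _).mpr hφ.pderiv.pderiv), eval_C, constantCoeff_C]
  -- Euler's identity, once for `φ` and once for each of its first partial derivatives
  have euler₁ : ∀ i, eval x (pderiv i φ) = ∑ j, x j * constantCoeff (pderiv j (pderiv i φ)) := by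
    intro i
    have := congrArg (eval x) (hφ.pderiv (i := i)).sum_X_mul_pderiv
    rw [Nat.add_one_sub_one, one_nsmul] at this
    rw [← this, map_sum]
    refine sum_congr rfl fun j _ => ?_
    rw [map_mul, eval_X, hconst]
  have euler₂ := congrArg (eval x) hφ.sum_X_mul_pderiv
  simp only [map_sum, map_mul, eval_X, euler₁, map_nsmul] at euler₂
  rw [nsmul_eq_mul, Nat.cast_ofNat] at euler₂
  rw [← euler₂]
  simp [dotProduct, Matrix.mulVec, hessianAtZero, mul_comm]

theorem IsHomogeneous.eval_eq_inner_toEuclideanLin [Fintype σ] [DecidableEq σ]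
    {φ : MvPolynomial σ ℝ} (hφ : φ.IsHomogeneous 2) (x : EuclideanSpace ℝ σ) :
    eval x.ofLp φ = ⟪x, ((1 / 2 : ℝ) • hessianAtZero φ).toEuclideanLin x⟫_ℝ := by
  rw [EuclideanSpace.inner_eq_star_dotProduct, Matrix.toLpLin_apply]
  simp only [Matrix.smul_mulVec, star_trivial, dotProduct_smul, dotProduct_comm _ x.ofLp,
    ← hφ.two_mul_eval_eq_dotProduct, smul_eq_mul]
  ring

end MvPolynomial

section InnerSelfMap

variable {E : Type*} [NormedAddCommGroup E] [InnerProductSpace ℝ E] [FiniteDimensional ℝ E]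
  (T : E →ₗ[ℝ] E)

theorem fderiv_inner_self_map_apply (x v : E) :
    fderiv ℝ (fun y => ⟪y, T y⟫_ℝ) x v = ⟪x, T v⟫_ℝ + ⟪v, T x⟫_ℝ := by
  have hT : HasFDerivAt T (LinearMap.toContinuousLinearMap T) x :=
    (LinearMap.toContinuousLinearMap T).hasFDerivAt
  rw [fderiv_inner_apply ℝ differentiableAt_fun_id hT.differentiableAt, fderiv_fun_id, hT.fderiv]
  rfl

theorem fderiv_fderiv_inner_self_map_apply (x v : E) :
    fderiv ℝ (fun y => fderiv ℝ (fun z => ⟪z, T z⟫_ℝ) y v) x v = 2 * ⟪v, T v⟫_ℝ := by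
  have hT : HasFDerivAt T (LinearMap.toContinuousLinearMap T) x :=
    (LinearMap.toContinuousLinearMap T).hasFDerivAt
  simp_rw [fderiv_inner_self_map_apply]
  rw [fderiv_fun_add (differentiableAt_fun_id.inner ℝ (differentiableAt_const _))
      ((differentiableAt_const _).inner ℝ hT.differentiableAt), add_apply,
    fderiv_inner_apply ℝ differentiableAt_fun_id (differentiableAt_const _),
    fderiv_inner_apply ℝ (differentiableAt_const _) hT.differentiableAt, hT.fderiv]
  simp [two_mul]

end InnerSelfMap

theorem lap_inner_self_map {n : ℕ} (T : EuclideanSpace ℝ (Fin n) →ₗ[ℝ] EuclideanSpace ℝ (Fin n))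
    (x : EuclideanSpace ℝ (Fin n)) :
    lap (fun y => ⟪y, T y⟫_ℝ) x = 2 * LinearMap.trace ℝ _ T := by
  simp_rw [lap, fderiv_fderiv_inner_self_map_apply, ← mul_sum,
    LinearMap.trace_eq_sum_inner T (EuclideanSpace.basisFun _ ℝ), EuclideanSpace.basisFun_apply]

theorem exists_min_neg_of_sum_eq_zero {ι : Type*} [Fintype ι] {μ : ι → ℝ}
    (hsum : ∑ k, μ k = 0) (hμ : μ ≠ 0) : ∃ k₀, μ k₀ < 0 ∧ ∀ k, μ k₀ ≤ μ k := by
  obtain ⟨k, hk⟩ := Function.ne_iff.mp hμ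
  obtain ⟨k₀, -, hmin⟩ := exists_min_image univ μ ⟨k, mem_univ k⟩
  refine ⟨k₀, not_le.mp fun h₀ => hk ?_, fun k => hmin k (mem_univ k)⟩
  exact (sum_eq_zero_iff_of_nonneg fun j _ => h₀.trans (hmin j (mem_univ j))).mp hsum k (mem_univ k)

theorem sum_mul_sq_neg_of_sum_eq_zero {ι : Type*} [Fintype ι] {μ c : ι → ℝ}
    (hsum : ∑ k, μ k = 0) {k₀ : ι} (hneg : μ k₀ < 0) (hmin : ∀ k, μ k₀ ≤ μ k)
    (hc : (Fintype.card ι - 1) * ∑ k, c k ^ 2 < Fintype.card ι * c k₀ ^ 2) :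
    ∑ k, μ k * c k ^ 2 < 0 := by
  set M := (Fintype.card ι - 1) * -μ k₀
  -- the other terms, each at least `μ k₀`, sum to `-μ k`
  have hle : ∀ k, μ k ≤ M := by
    intro k
    have := single_le_sum (fun j _ => sub_nonneg.mpr (hmin j)) (mem_univ k)
    rw [sum_sub_distrib, hsum, sum_const, card_univ, nsmul_eq_mul] at this
    linarith
  have key := single_le_sum (s := univ) (f := fun k => (M - μ k) * c k ^ 2)
    (fun k _ => mul_nonneg (sub_nonneg.mpr (hle k)) (sq_nonneg _)) (mem_univ k₀)
  simp only [sub_mul, sum_sub_distrib, ← mul_sum] at key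
  nlinarith

theorem LinearMap.IsSymmetric.exists_forall_inner_map_self_neg {E : Type*} [NormedAddCommGroup E]
    [InnerProductSpace ℝ E] [FiniteDimensional ℝ E] {n : ℕ} (hn : Module.finrank ℝ E = n)
    {T : E →ₗ[ℝ] E} (hT : T.IsSymmetric) (htr : LinearMap.trace ℝ E T = 0) (hT0 : T ≠ 0) :
    ∃ v : E, ‖v‖ = 1 ∧ ∀ x : E, (n - 1) * ‖x‖ ^ 2 < n * ⟪v, x⟫_ℝ ^ 2 → ⟪x, T x⟫_ℝ < 0 := by
  set b := hT.eigenvectorBasis hn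
  set μ := hT.eigenvalues hn
  have hquad : ∀ x, ⟪x, T x⟫_ℝ = ∑ k, μ k * ⟪b k, x⟫_ℝ ^ 2 := by
    intro x
    rw [← b.sum_inner_mul_inner x (T x)]
    refine sum_congr rfl fun k _ => ?_
    rw [← hT, hT.apply_eigenvectorBasis, real_inner_smul_left, real_inner_comm]
    rw [RCLike.ofReal_real_eq_id, id_eq]
    ring
  have hμ : μ ≠ 0 := by
    intro hμ
    refine hT0 (b.toBasis.ext fun k => ?_)
    have hμk : hT.eigenvalues hn k = 0 := congrFun hμ k
    simp [b, hT.apply_eigenvectorBasis, hμk]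
  have hsum : ∑ k, μ k = 0 := by
    simpa [μ] using (hT.trace_eq_sum_eigenvalues hn).symm.trans htr
  obtain ⟨k₀, hneg, hmin⟩ := exists_min_neg_of_sum_eq_zero hsum hμ
  refine ⟨b k₀, b.orthonormal.1 k₀, fun x hx => ?_⟩
  rw [hquad]
  refine sum_mul_sq_neg_of_sum_eq_zero hsum hneg hmin ?_
  simpa [b.sum_sq_inner_right, hn] using hx

theorem exists_isSymmetric_eq_inner_self_of_isHomogeneous {ι : Type*} [Fintype ι]
    [DecidableEq ι] (P : MvPolynomial ι ℝ) (p : EuclideanSpace ℝ ι → ℝ)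
    (hp : ∀ x : EuclideanSpace ℝ ι, p x = eval (fun i => x i) P)
    (hhom : ∀ t : ℝ, 0 < t → ∀ x, p (t • x) = t ^ 2 * p x) :
    ∃ T : EuclideanSpace ℝ ι →ₗ[ℝ] EuclideanSpace ℝ ι, T.IsSymmetric ∧ p = fun x => ⟪x, T x⟫_ℝ := by
  refine ⟨Matrix.toEuclideanLin ((1 / 2 : ℝ) • (homogeneousComponent 2 P).hessianAtZero), ?_, ?_⟩
  · refine Matrix.isSymmetric_toEuclideanLin_iff.mpr ?_
    rw [Matrix.IsHermitian, Matrix.conjTranspose_eq_transpose_of_trivial, Matrix.transpose_smul,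
      hessianAtZero_transpose]
  · funext x
    rw [hp, ← (homogeneousComponent_isHomogeneous 2 P).eval_eq_inner_toEuclideanLin]
    refine (eval_homogeneousComponent_of_eval_smul P 2 _ fun t ht => ?_).symm
    have := hhom t ht x
    rw [hp, hp] at this
    exact this

section Cone

variable {E : Type*} [NormedAddCommGroup E] [InnerProductSpace ℝ E]

def unitBallCone (n : ℕ) (v : E) : Set E :=
  {x ∈ ball 0 1 | (n - 1) * ‖x‖ ^ 2 < n * ⟪v, x⟫_ℝ ^ 2}

theorem isOpen_unitBallCone (n : ℕ) (v : E) : IsOpen (unitBallCone n v) :=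
  isOpen_ball.inter <| isOpen_lt (g := fun x => n * ⟪v, x⟫_ℝ ^ 2) (by fun_prop) (by fun_prop)

theorem half_smul_mem_unitBallCone (n : ℕ) {v : E} (hv : ‖v‖ = 1) :
    (1 / 2 : ℝ) • v ∈ unitBallCone n v := by
  refine ⟨by norm_num [norm_smul, hv], ?_⟩
  rw [norm_smul, real_inner_smul_right, real_inner_self_eq_norm_sq, hv]
  norm_num

theorem preimage_unitBallCone (n : ℕ) (f : E ≃ₗᵢ[ℝ] E) (v : E) :
    f ⁻¹' unitBallCone n (f v) = unitBallCone n v := by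
  ext x
  simp [unitBallCone, f.inner_map_map]

variable [FiniteDimensional ℝ E] [MeasurableSpace E] [BorelSpace E]

theorem volume_unitBallCone_eq (n : ℕ) {v w : E} (h : ‖v‖ = ‖w‖) :
    volume (unitBallCone n v) = volume (unitBallCone n w) := by
  set f := (ℝ ∙ (v - w))ᗮ.reflection
  rw [← Submodule.reflection_sub h, ← preimage_unitBallCone n f v]
  exact f.measurePreserving.measure_preimage
    (isOpen_unitBallCone n _).measurableSet.nullMeasurableSet

theorem volume_unitBallCone_pos (n : ℕ) {v : E} (hv : ‖v‖ = 1) :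
    0 < volume (unitBallCone n v) :=
  (isOpen_unitBallCone n v).measure_pos volume ⟨_, half_smul_mem_unitBallCone n hv⟩

theorem volume_unitBallCone_lt_top (n : ℕ) (v : E) : volume (unitBallCone n v) < ⊤ :=
  (measure_mono fun _ hx => hx.1).trans_lt measure_ball_lt_top

end Cone

/-- There is a dimensional constant `c_n > 0` such that the negativity set in the unit
ball of any nonzero degree-2 homogeneous harmonic polynomial on `ℝⁿ` has measure at
least `c_n`. -/
theorem measure_neg_set_homogeneous_harmonic_poly (n : ℕ) (hn : 1 ≤ n) :
    ∃ c : ℝ, 0 < c ∧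
      ∀ (P : MvPolynomial (Fin n) ℝ) (p : EuclideanSpace ℝ (Fin n) → ℝ),
        (∀ x : EuclideanSpace ℝ (Fin n), p x = MvPolynomial.eval (fun i => x i) P) →
        (∀ x, lap p x = 0) →
        (∀ (t : ℝ), 0 < t → ∀ x, p (t • x) = t ^ 2 * p x) →
        p ≠ 0 →
        ENNReal.ofReal c ≤ volume {x ∈ ball (0 : EuclideanSpace ℝ (Fin n)) 1 | p x < 0} := by
  set e₀ : EuclideanSpace ℝ (Fin n) := EuclideanSpace.single ⟨0, hn⟩ 1
  have he₀ : ‖e₀‖ = 1 := by simp [e₀]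
  refine ⟨(volume (unitBallCone n e₀)).toReal, ENNReal.toReal_pos
    (volume_unitBallCone_pos n he₀).ne' (volume_unitBallCone_lt_top n e₀).ne, ?_⟩
  intro P p hp hlap hhom hp0
  obtain ⟨T, hT, rfl⟩ := exists_isSymmetric_eq_inner_self_of_isHomogeneous P p hp hhom
  have htr : LinearMap.trace ℝ _ T = 0 := by simpa [lap_inner_self_map] using hlap 0
  have hT0 : T ≠ 0 := by
    rintro rfl
    exact hp0 (funext fun x => by simp)
  obtain ⟨v, hv, hneg⟩ := hT.exists_forall_inner_map_self_neg finrank_euclideanSpace_fin htr hT0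
  have hsub : unitBallCone n v ⊆ {x ∈ ball 0 1 | ⟪x, T x⟫_ℝ < 0} :=
    fun x hx => ⟨hx.1, hneg x hx.2⟩
  calc ENNReal.ofReal (volume (unitBallCone n e₀)).toReal
      = volume (unitBallCone n v) := by
        rw [ENNReal.ofReal_toReal (volume_unitBallCone_lt_top n e₀).ne,
          volume_unitBallCone_eq n (he₀.trans hv.symm)]
    _ ≤ _ := measure_mono hsub
end
end

section
/- Let U ⊂ ℝ^n be a bounded open connected set, Λ > 0 strictly less than the first Dirichlet eigenvalue μ_U of -Δ on U. Let f ∈ H¹₀(U) solve -Δf - Λf = -Λ in U (in the weak sense). Then f ≤ 0 a.e. in U. -/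
/-!
Suppose `f > 0` somewhere. Testing the equation with `f⁺` would give
`∫ |∇f⁺|² = Λ ∫ f⁺ (f - 1) ≤ Λ ∫ (f⁺)²`, against the strict Rayleigh bound. As `f` is only `C²`
inside `U`, `f⁺` is replaced by `ψ(f)`, where `ψ = ramp ε` is a `C¹` smoothing of `(t - ε)⁺` with
`ψ' = χ = step ε ∈ [0, 1]`, and the equation is multiplied by `φ(f)` with `φ = sqRamp ε`,
`φ' = χ²`. All these functions live on the compact set `{f ≥ ε} ⊆ U`, so integration by parts
gives `∫ |∇ψ(f)|² = ∫ χ(f)² |∇f|² = -∫ φ(f) Δf = Λ ∫ φ(f) (f - 1)`, and `φ(t) (t - 1) ≤ ψ(t)²`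
for `ε ≤ 1/2` closes the argument.
-/

open MeasureTheory Metric Real
noncomputable section

open scoped Gradient InnerProductSpace

lemma intervalIntegral_eq_zero_of_eqOn_Iic {g : ℝ → ℝ} {a t : ℝ} (ht : t ≤ a)
    (hg : Set.EqOn g 0 (Set.Iic a)) : ∫ s in a..t, g s = 0 := by
  rw [intervalIntegral.integral_symm,
    intervalIntegral.integral_congr (g := 0) fun s hs => hg (Set.uIcc_of_le ht ▸ hs).2]
  simp

namespace Cutoff

def step (ε s : ℝ) : ℝ := smoothTransition ((s - ε) / ε)

def ramp (ε t : ℝ) : ℝ := ∫ s in ε..t, step ε s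

def sqRamp (ε t : ℝ) : ℝ := ∫ s in ε..t, step ε s ^ 2

variable {ε : ℝ}

lemma continuous_step (ε : ℝ) : Continuous (step ε) :=
  smoothTransition.continuous.comp (by fun_prop)

lemma step_nonneg (ε s : ℝ) : 0 ≤ step ε s := smoothTransition.nonneg _

lemma step_le_one (ε s : ℝ) : step ε s ≤ 1 := smoothTransition.le_one _

lemma step_of_le (hε : 0 < ε) {s : ℝ} (h : s ≤ ε) : step ε s = 0 :=
  smoothTransition.zero_of_nonpos (div_nonpos_of_nonpos_of_nonneg (by linarith) hε.le)

lemma step_of_two_mul_le (hε : 0 < ε) {s : ℝ} (h : 2 * ε ≤ s) : step ε s = 1 :=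
  smoothTransition.one_of_one_le ((le_div_iff₀ hε).2 (by linarith))

lemma hasDerivAt_ramp (ε t : ℝ) : HasDerivAt (ramp ε) (step ε t) t :=
  intervalIntegral.integral_hasDerivAt_right ((continuous_step ε).intervalIntegrable _ _)
    ((continuous_step ε).stronglyMeasurableAtFilter _ _) (continuous_step ε).continuousAt

lemma hasDerivAt_sqRamp (ε t : ℝ) : HasDerivAt (sqRamp ε) (step ε t ^ 2) t :=
  intervalIntegral.integral_hasDerivAt_right (((continuous_step ε).pow 2).intervalIntegrable _ _)
    (((continuous_step ε).pow 2).stronglyMeasurableAtFilter _ _)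
    ((continuous_step ε).pow 2).continuousAt

lemma contDiff_sqRamp (ε : ℝ) : ContDiff ℝ 1 (sqRamp ε) := by
  rw [contDiff_one_iff_deriv]
  refine ⟨fun t => (hasDerivAt_sqRamp ε t).differentiableAt, ?_⟩
  rw [funext fun t => (hasDerivAt_sqRamp ε t).deriv]
  exact (continuous_step ε).pow 2

lemma lipschitzWith_ramp (ε : ℝ) : LipschitzWith 1 (ramp ε) := by
  refine lipschitzWith_of_nnnorm_deriv_le (fun t => (hasDerivAt_ramp ε t).differentiableAt)
    fun t => ?_
  rw [(hasDerivAt_ramp ε t).deriv, ← NNReal.coe_le_coe, coe_nnnorm,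
    norm_of_nonneg (step_nonneg ε t)]
  exact step_le_one ε t

lemma ramp_of_le (hε : 0 < ε) {t : ℝ} (h : t ≤ ε) : ramp ε t = 0 :=
  intervalIntegral_eq_zero_of_eqOn_Iic h fun _ hs => step_of_le hε hs

lemma sqRamp_of_le (hε : 0 < ε) {t : ℝ} (h : t ≤ ε) : sqRamp ε t = 0 :=
  intervalIntegral_eq_zero_of_eqOn_Iic h fun _ hs => by simp [step_of_le hε hs]

lemma sqRamp_nonneg (hε : 0 < ε) (t : ℝ) : 0 ≤ sqRamp ε t := by
  rcases le_or_gt t ε with h | h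
  · exact (sqRamp_of_le hε h).ge
  · exact intervalIntegral.integral_nonneg h.le fun s _ => sq_nonneg _

lemma sqRamp_le_ramp (hε : 0 < ε) (t : ℝ) : sqRamp ε t ≤ ramp ε t := by
  rcases le_or_gt t ε with h | h
  · rw [sqRamp_of_le hε h, ramp_of_le hε h]
  · refine intervalIntegral.integral_mono_on h.le
      (((continuous_step ε).pow 2).intervalIntegrable _ _)
      ((continuous_step ε).intervalIntegrable _ _) fun s _ => ?_
    nlinarith [step_nonneg ε s, step_le_one ε s]

lemma sub_two_mul_le_ramp (hε : 0 < ε) {t : ℝ} (h : 2 * ε ≤ t) : t - 2 * ε ≤ ramp ε t := by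
  have hhead : 0 ≤ ∫ s in ε..2 * ε, step ε s :=
    intervalIntegral.integral_nonneg (by linarith) fun s _ => step_nonneg ε s
  have htail : ∫ s in 2 * ε..t, step ε s = t - 2 * ε := by
    rw [intervalIntegral.integral_congr (g := fun _ => 1)
      fun s hs => step_of_two_mul_le hε (Set.uIcc_of_le h ▸ hs).1]
    simp
  rw [ramp, ← intervalIntegral.integral_add_adjacent_intervals
    ((continuous_step ε).intervalIntegrable ε (2 * ε)) ((continuous_step ε).intervalIntegrable _ t)]
  linarith

lemma sqRamp_mul_sub_one_le_ramp_sq (hε : 0 < ε) (hε₂ : ε ≤ 1 / 2) (t : ℝ) :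
    sqRamp ε t * (t - 1) ≤ ramp ε t ^ 2 := by
  rcases le_or_gt t 1 with h | h
  · nlinarith [sqRamp_nonneg hε t, sq_nonneg (ramp ε t)]
  · nlinarith [sub_two_mul_le_ramp hε (show 2 * ε ≤ t by linarith), sqRamp_le_ramp hε t]

end Cutoff

lemma integrable_mul_of_tsupport_subset {X : Type*} [TopologicalSpace X] [MeasurableSpace X]
    [OpensMeasurableSpace X] {μ : Measure X} [IsFiniteMeasureOnCompacts μ] {U : Set X}
    (hU : IsOpen U) {a h : X → ℝ} (ha : Continuous a) (hac : HasCompactSupport a)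
    (haU : tsupport a ⊆ U) (hh : ContinuousOn h U) : Integrable (fun x => a x * h x) μ :=
  ((ha.continuousOn.mul hh).continuous_of_tsupport_subset hU
    (tsupport_mul_subset_left.trans haU)).integrable_of_hasCompactSupport hac.mul_right

lemma not_ae_mem_imp_eq_zero_of_pos {X : Type*} [TopologicalSpace X] [MeasurableSpace X]
    {μ : Measure X} [μ.IsOpenPosMeasure] {U : Set X} (hU : IsOpen U) {w : X → ℝ}
    (hw : Continuous w) {x₀ : X} (hx₀ : x₀ ∈ U) (hwx₀ : 0 < w x₀) :
    ¬∀ᵐ x ∂μ, x ∈ U → w x = 0 := by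
  intro hae
  have hopen : IsOpen (U ∩ w ⁻¹' Set.Ioi 0) := hU.inter (isOpen_Ioi.preimage hw)
  refine (hopen.measure_pos μ ⟨x₀, hx₀, hwx₀⟩).ne' (measure_mono_null ?_ (ae_iff.1 hae))
  rintro x ⟨hxU, hx⟩ h
  exact (h hxU).not_gt hx

lemma setOf_le_subset_of_eq_zero_off {X : Type*} {U : Set X} {f : X → ℝ}
    (hf₀ : ∀ x ∉ U, f x = 0) {ε : ℝ} (hε : 0 < ε) : {x | ε ≤ f x} ⊆ U :=
  fun x hx => by_contra fun h => hε.not_ge (hf₀ x h ▸ hx)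

lemma tsupport_comp_subset_setOf_le {X : Type*} [TopologicalSpace X] {φ : ℝ → ℝ} {f : X → ℝ}
    {ε : ℝ} (hφ₀ : Set.EqOn φ 0 (Set.Iic ε)) (hf : Continuous f) :
    tsupport (φ ∘ f) ⊆ {x | ε ≤ f x} :=
  closure_minimal (fun x hx => show ε ≤ f x from not_lt.1 fun h => hx (hφ₀ h.le))
    (isClosed_le continuous_const hf)

lemma contDiff_comp_of_eqOn_Iic {E : Type*} [NormedAddCommGroup E] [NormedSpace ℝ E]
    {k : ℕ∞} {U : Set E} (hU : IsOpen U) {φ : ℝ → ℝ} {f : E → ℝ} {ε : ℝ} (hε : 0 < ε)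
    (hφ : ContDiff ℝ k φ) (hφ₀ : Set.EqOn φ 0 (Set.Iic ε)) (hf : Continuous f)
    (hfU : ContDiffOn ℝ k f U) (hf₀ : ∀ x ∉ U, f x = 0) : ContDiff ℝ k (φ ∘ f) := by
  refine contDiff_iff_contDiffAt.2 fun x => ?_
  by_cases hx : x ∈ U
  · exact hφ.contDiffAt.comp x (hfU.contDiffAt (hU.mem_nhds hx))
  · have hsmall : ∀ᶠ y in nhds x, f y < ε :=
      hf.continuousAt.eventually_lt continuousAt_const (by rw [hf₀ x hx]; exact hε)
    exact contDiffAt_const.congr_of_eventuallyEq (hsmall.mono fun y hy => hφ₀ hy.le)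

lemma HasDerivAt.gradient_comp {F : Type*} [NormedAddCommGroup F] [InnerProductSpace ℝ F]
    [CompleteSpace F] {φ : ℝ → ℝ} {φ' : ℝ} {f : F → ℝ} {x : F} (hφ : HasDerivAt φ φ' (f x))
    (hf : DifferentiableAt ℝ f x) : ∇ (φ ∘ f) x = φ' • ∇ f x := by
  refine HasGradientAt.gradient (hasGradientAt_iff_hasFDerivAt.2 ?_)
  rw [map_smul, toDual_gradient]
  exact hφ.comp_hasFDerivAt x hf.hasFDerivAt

lemma sum_fderiv_single_mul_eq_inner_gradient {n : ℕ} (a u : EuclideanSpace ℝ (Fin n) → ℝ)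
    (x : EuclideanSpace ℝ (Fin n)) :
    ∑ i, fderiv ℝ a x (EuclideanSpace.single i 1) * fderiv ℝ u x (EuclideanSpace.single i 1) =
      ⟪∇ a x, ∇ u x⟫_ℝ := by
  have hcoord (g : EuclideanSpace ℝ (Fin n) → ℝ) (i : Fin n) :
      fderiv ℝ g x (EuclideanSpace.single i 1) = ∇ g x i := by
    simp [← inner_gradient_left, EuclideanSpace.inner_single_right]
  simp only [hcoord, PiLp.inner_apply, RCLike.inner_apply, conj_trivial, mul_comm]

theorem integral_mul_lap_eq_neg_integral_inner_gradient {n : ℕ}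
    {U : Set (EuclideanSpace ℝ (Fin n))} (hU : IsOpen U) {a u : EuclideanSpace ℝ (Fin n) → ℝ}
    (ha : ContDiff ℝ 1 a) (hac : HasCompactSupport a) (haU : tsupport a ⊆ U)
    (hu : ContDiffOn ℝ 2 u U) :
    ∫ x, a x * lap u x = -∫ x, ⟪∇ a x, ∇ u x⟫_ℝ := by
  set e : Fin n → EuclideanSpace ℝ (Fin n) := fun i => EuclideanSpace.single i 1
  have hpartial (i : Fin n) : ContDiffOn ℝ 1 (fun y => fderiv ℝ u y (e i)) U :=
    (hu.fderiv_of_isOpen hU (by norm_num)).clm_apply contDiffOn_const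
  have hpartial₂ (i : Fin n) :
      ContinuousOn (fun y => fderiv ℝ (fun z => fderiv ℝ u z (e i)) y (e i)) U :=
    ((hpartial i).continuousOn_fderiv_of_isOpen hU le_rfl).clm_apply continuousOn_const
  have hint₁ (i : Fin n) :
      Integrable fun x => a x * fderiv ℝ (fun z => fderiv ℝ u z (e i)) x (e i) :=
    integrable_mul_of_tsupport_subset hU ha.continuous hac haU (hpartial₂ i)
  have hint₂ (i : Fin n) : Integrable fun x => fderiv ℝ a x (e i) * fderiv ℝ u x (e i) :=
    integrable_mul_of_tsupport_subset hU
      ((ha.continuous_fderiv one_ne_zero).clm_apply continuous_const)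
      (hac.fderiv_apply ℝ (e i)) ((tsupport_fderiv_apply_subset ℝ (e i)).trans haU)
      (hpartial i).continuousOn
  have hparts (i : Fin n) :
      ∫ x, a x * fderiv ℝ (fun z => fderiv ℝ u z (e i)) x (e i) =
        -∫ x, fderiv ℝ a x (e i) * fderiv ℝ u x (e i) :=
    integral_mul_fderiv_eq_neg_fderiv_mul_of_integrable (hint₂ i) (hint₁ i)
      (integrable_mul_of_tsupport_subset hU ha.continuous hac haU (hpartial i).continuousOn)
      (fun x _ => ha.differentiable one_ne_zero x)
      (fun x hx => ((hpartial i).differentiableOn one_ne_zero x (haU hx)).differentiableAt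
        (hU.mem_nhds (haU hx)))
  simp only [lap, Finset.mul_sum, ← sum_fderiv_single_mul_eq_inner_gradient]
  rw [integral_finsetSum _ fun i _ => hint₁ i, integral_finsetSum _ fun i _ => hint₂ i,
    ← Finset.sum_neg_distrib]
  exact Finset.sum_congr rfl fun i _ => hparts i

open Cutoff

lemma integral_norm_gradient_ramp_comp_sq_le {n : ℕ} {U : Set (EuclideanSpace ℝ (Fin n))}
    (hUo : IsOpen U) (hUb : Bornology.IsBounded U) {Λ : ℝ} (hΛ : 0 ≤ Λ)
    {f : EuclideanSpace ℝ (Fin n) → ℝ} (hf : Continuous f) (hf₀ : ∀ x ∉ U, f x = 0)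
    (hfU : ContDiffOn ℝ 2 f U) (heq : ∀ x ∈ U, -lap f x - Λ * f x = -Λ)
    {ε : ℝ} (hε : 0 < ε) (hε₂ : ε ≤ 1 / 2) :
    ∫ x in U, ‖∇ (ramp ε ∘ f) x‖ ^ 2 ≤ Λ * ∫ x in U, ramp ε (f x) ^ 2 := by
  set a := sqRamp ε ∘ f
  have hKU := setOf_le_subset_of_eq_zero_off hf₀ hε
  have hKc : IsCompact {x | ε ≤ f x} :=
    isCompact_of_isClosed_isBounded (isClosed_le continuous_const hf) (hUb.subset hKU)
  have hsupp {φ : ℝ → ℝ} (hφ₀ : Set.EqOn φ 0 (Set.Iic ε)) :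
      HasCompactSupport (φ ∘ f) ∧ tsupport (φ ∘ f) ⊆ U :=
    have hK := tsupport_comp_subset_setOf_le hφ₀ hf
    ⟨hKc.of_isClosed_subset (isClosed_tsupport _) hK, hK.trans hKU⟩
  obtain ⟨hac, haU⟩ : HasCompactSupport a ∧ tsupport a ⊆ U :=
    hsupp fun _ => sqRamp_of_le hε
  obtain ⟨hwc, hwU⟩ := hsupp fun _ => ramp_of_le hε
  have ha : ContDiff ℝ 1 a := contDiff_comp_of_eqOn_Iic hUo hε (contDiff_sqRamp ε)
    (fun _ => sqRamp_of_le hε) hf (hfU.of_le (by norm_num)) hf₀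
  have hw : Continuous (ramp ε ∘ f) := (lipschitzWith_ramp ε).continuous.comp hf
  have hgrad (x : EuclideanSpace ℝ (Fin n)) (hx : x ∈ U) :
      ‖∇ (ramp ε ∘ f) x‖ ^ 2 = ⟪∇ a x, ∇ f x⟫_ℝ := by
    have hfx : DifferentiableAt ℝ f x :=
      (hfU.contDiffAt (hUo.mem_nhds hx)).differentiableAt (by norm_num)
    rw [(hasDerivAt_ramp ε _).gradient_comp hfx, (hasDerivAt_sqRamp ε _).gradient_comp hfx,
      norm_smul, real_inner_smul_left, real_inner_self_eq_norm_sq,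
      norm_of_nonneg (step_nonneg _ _)]
    ring
  have hlap (x) (hx : x ∈ U) : lap f x = Λ * (1 - f x) := by linarith [heq x hx]
  calc ∫ x in U, ‖∇ (ramp ε ∘ f) x‖ ^ 2
      = ∫ x in U, ⟪∇ a x, ∇ f x⟫_ℝ := setIntegral_congr_fun hUo.measurableSet hgrad
    _ = ∫ x, ⟪∇ a x, ∇ f x⟫_ℝ := setIntegral_eq_integral_of_forall_compl_eq_zero fun x hx => by
          rw [gradient, fderiv_of_notMem_tsupport ℝ fun h => hx (haU h), map_zero,
            inner_zero_left]
    _ = -∫ x, a x * lap f x := by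
          rw [integral_mul_lap_eq_neg_integral_inner_gradient hUo ha hac haU hfU, neg_neg]
    _ = -∫ x in U, a x * lap f x := by
          rw [setIntegral_eq_integral_of_forall_compl_eq_zero fun x hx => by
            rw [image_eq_zero_of_notMem_tsupport fun h => hx (haU h), zero_mul]]
    _ = ∫ x in U, Λ * (a x * (f x - 1)) := by
          rw [← integral_neg]
          exact setIntegral_congr_fun hUo.measurableSet fun x hx => by
            simp only [hlap x hx]; ring
    _ ≤ ∫ x in U, Λ * ramp ε (f x) ^ 2 := by
          refine setIntegral_mono_on ?_ ?_ hUo.measurableSet fun x _ =>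
            mul_le_mul_of_nonneg_left (sqRamp_mul_sub_one_le_ramp_sq hε hε₂ _) hΛ
          · exact ((integrable_mul_of_tsupport_subset hUo ha.continuous hac haU
              (hf.sub continuous_const).continuousOn).const_mul Λ).integrableOn
          · simp only [sq]
            exact ((integrable_mul_of_tsupport_subset hUo hw hwc hwU
              hw.continuousOn).const_mul Λ).integrableOn
    _ = Λ * ∫ x in U, ramp ε (f x) ^ 2 := integral_const_mul Λ _

theorem fredholm_auxiliary_nonpositive_general
    (n : ℕ) (U : Set (EuclideanSpace ℝ (Fin n)))
    (hUo : IsOpen U) (hUb : Bornology.IsBounded U)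
    (Λ : ℝ) (hΛpos : 0 < Λ)
    (hΛ : ∀ w : EuclideanSpace ℝ (Fin n) → ℝ,
      (∃ K : NNReal, LipschitzWith K w) → (∀ x ∉ U, w x = 0) →
      ¬(∀ᵐ x ∂volume, x ∈ U → w x = 0) →
      Λ * ∫ x in U, (w x) ^ 2 < ∫ x in U, ‖gradient w x‖ ^ 2)
    (f : EuclideanSpace ℝ (Fin n) → ℝ)
    (hfLip : ∃ K : NNReal, LipschitzWith K f)
    (hf0 : ∀ x ∉ U, f x = 0)
    (hfreg : ContDiffOn ℝ 2 f U)
    (heq : ∀ x ∈ U, -lap f x - Λ * f x = -Λ) :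
    ∀ x ∈ U, f x ≤ 0 := by
  intro x₀ hx₀
  by_contra! hpos
  obtain ⟨K, hK⟩ := hfLip
  set ε := min (f x₀ / 3) (1 / 2)
  have hε : 0 < ε := lt_min (by linarith) one_half_pos
  have hεx₀ : 2 * ε < f x₀ := by linarith [min_le_left (f x₀ / 3) (1 / 2)]
  have hw : LipschitzWith (1 * K) (ramp ε ∘ f) := (lipschitzWith_ramp ε).comp hK
  have hw₀ (x) (hx : x ∉ U) : (ramp ε ∘ f) x = 0 := by
    simp [hf0 x hx, ramp_of_le hε hε.le]
  have hwx₀ : 0 < (ramp ε ∘ f) x₀ := by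
    linarith [sub_two_mul_le_ramp hε hεx₀.le, show (ramp ε ∘ f) x₀ = ramp ε (f x₀) from rfl]
  have hlt := hΛ _ ⟨_, hw⟩ hw₀ (not_ae_mem_imp_eq_zero_of_pos hUo hw.continuous hx₀ hwx₀)
  have hle := integral_norm_gradient_ramp_comp_sq_le hUo hUb hΛpos.le hK.continuous hf0 hfreg
    heq hε (min_le_right _ _)
  exact hlt.not_ge hle

/-- If `0 < Λ` is strictly below the first Dirichlet eigenvalue of `-Δ` on the bounded
connected open set `U` (expressed by the strict Rayleigh quotient inequality for all
nontrivial `H¹₀(U)` functions, here Lipschitz functions vanishing outside `U`), and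
`f ∈ H¹₀(U)` solves `-Δf - Λf = -Λ` in `U`, then `f ≤ 0` in `U`. -/
theorem fredholm_auxiliary_nonpositive
    (n : ℕ) (U : Set (EuclideanSpace ℝ (Fin n)))
    (hUo : IsOpen U) (hUb : Bornology.IsBounded U) (hUc : IsConnected U)
    (Λ : ℝ) (hΛpos : 0 < Λ)
    (hΛ : ∀ w : EuclideanSpace ℝ (Fin n) → ℝ,
      (∃ K : NNReal, LipschitzWith K w) → (∀ x ∉ U, w x = 0) →
      ¬(∀ᵐ x ∂volume, x ∈ U → w x = 0) →
      Λ * ∫ x in U, (w x) ^ 2 < ∫ x in U, ‖gradient w x‖ ^ 2)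
    (f : EuclideanSpace ℝ (Fin n) → ℝ)
    (hfLip : ∃ K : NNReal, LipschitzWith K f)
    (hf0 : ∀ x ∉ U, f x = 0)
    (hfreg : ContDiffOn ℝ 2 f U)
    (heq : ∀ x ∈ U, -lap f x - Λ * f x = -Λ) :
    ∀ x ∈ U, f x ≤ 0 :=
  fredholm_auxiliary_nonpositive_general n U hUo hUb Λ hΛpos hΛ f hfLip hf0 hfreg heq
end
end

section
/- (Appendix II constants estimate) Suppose real constants C₊, C₋, D₊, D₋, γ, μ and θ₀ ∈ (0, 2π/3) satisfy: C₊ sin(2θ₀ + D₊) + γ = 0, C₋ sin(2θ₀ + D₋) + μ = 0, C₊ cos(2θ₀ + D₊) = C₋ cos(2θ₀ + D₋), C₊ sin(D₊) = -γ, and C₋ sin(4π/3 + D₋) = -μ. Then C₊² - C₋² = γ² - μ², and if additionally |C₊| > 10⁶(|γ| + |μ|), then |C₋| ≤ 2|μ| and hence |C₊|² ≤ γ² - μ² + 4μ², giving a bound on |C₊| in terms of |γ| and |μ| — contradicting |C₊| > 10⁶(|γ|+|μ|) when (γ,μ) ≠ (0,0) scale appropriately. -/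
/-!
If `C sin(φ + δ) = C sin(φ - δ)` with `sin δ ≠ 0`, then `C cos φ = 0`, so the common value
has square `C² cos² δ`. The conditions at `0` and `θ₀` give `γ² = C₊² cos² θ₀`, those at `θ₀`
and `2π/3` give `μ² = C₋² cos² (2π/3 - θ₀)`. One of `θ₀`, `2π/3 - θ₀` is at most `π/3`, where
`cos² ≥ 1/4`; for `θ₀` this would force `|C₊| ≤ 2|γ|`, so it is `2π/3 - θ₀`, and `|C₋| ≤ 2|μ|`.
The identity `C₊² - C₋² = γ² - μ²` is `C² = (C sin x)² + (C cos x)²` at `x = 2θ₀ + D±`.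
-/

open Real

theorem mul_sin_sq_add_mul_cos_sq (C x : ℝ) : (C * sin x) ^ 2 + (C * cos x) ^ 2 = C ^ 2 := by
  linear_combination C ^ 2 * sin_sq_add_cos_sq x

theorem sq_mul_sin_add_of_mul_sin_add_eq_mul_sin_sub {C φ δ : ℝ} (hδ : sin δ ≠ 0)
    (h : C * sin (φ + δ) = C * sin (φ - δ)) : (C * sin (φ + δ)) ^ 2 = C ^ 2 * cos δ ^ 2 := by
  have hcos : C * cos φ = 0 := by
    have hdiff : C * sin (φ + δ) - C * sin (φ - δ) = 2 * sin δ * (C * cos φ) := by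
      rw [sin_add, sin_sub]; ring
    rw [h, sub_self] at hdiff
    simpa [hδ] using hdiff.symm
  calc (C * sin (φ + δ)) ^ 2
      = (C * sin φ * cos δ + C * cos φ * sin δ) ^ 2 := by rw [sin_add]; ring
    _ = C ^ 2 * cos δ ^ 2 := by
      rw [hcos]
      linear_combination C ^ 2 * cos δ ^ 2 * sin_sq_add_cos_sq φ - cos δ ^ 2 * C * cos φ * hcos

theorem one_div_four_le_cos_sq {θ : ℝ} (h₀ : 0 ≤ θ) (h : θ ≤ π / 3) : 1 / 4 ≤ cos θ ^ 2 := by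
  have hcos : 1 / 2 ≤ cos θ := by
    rw [← cos_pi_div_three]
    exact cos_le_cos_of_nonneg_of_le_pi h₀ (by linarith [pi_pos]) h
  nlinarith

theorem one_div_four_le_cos_sq_or_cos_two_pi_div_three_sub_sq {θ : ℝ} (h₀ : 0 ≤ θ) (h : θ ≤ 2 * π / 3) :
    1 / 4 ≤ cos θ ^ 2 ∨ 1 / 4 ≤ cos (2 * π / 3 - θ) ^ 2 := by
  rcases le_total θ (π / 3) with hθ | hθ
  · exact .inl (one_div_four_le_cos_sq h₀ hθ)
  · exact .inr (one_div_four_le_cos_sq (by linarith) (by linarith))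

/-- Appendix II constants estimate. -/
theorem appendix_II_constants
    (Cp Cm Dp Dm γ μ θ₀ : ℝ)
    (hθ₀ : θ₀ ∈ Set.Ioo 0 (2 * π / 3))
    (h1 : Cp * Real.sin (2 * θ₀ + Dp) + γ = 0)
    (h2 : Cm * Real.sin (2 * θ₀ + Dm) + μ = 0)
    (h3 : Cp * Real.cos (2 * θ₀ + Dp) = Cm * Real.cos (2 * θ₀ + Dm))
    (h4 : Cp * Real.sin Dp = -γ)
    (h5 : Cm * Real.sin (4 * π / 3 + Dm) = -μ) :
    Cp ^ 2 - Cm ^ 2 = γ ^ 2 - μ ^ 2 ∧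
      (|Cp| > 10 ^ 6 * (|γ| + |μ|) →
        |Cm| ≤ 2 * |μ| ∧ Cp ^ 2 ≤ γ ^ 2 - μ ^ 2 + 4 * μ ^ 2) := by
  obtain ⟨hθ_pos, hθ_lt⟩ := hθ₀
  have hγ : Cp * sin (2 * θ₀ + Dp) = -γ := by linarith
  have hμ : Cm * sin (2 * θ₀ + Dm) = -μ := by linarith
  have key : Cp ^ 2 - Cm ^ 2 = γ ^ 2 - μ ^ 2 := by
    rw [← mul_sin_sq_add_mul_cos_sq Cp (2 * θ₀ + Dp), ← mul_sin_sq_add_mul_cos_sq Cm (2 * θ₀ + Dm),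
      hγ, hμ, h3]
    ring
  refine ⟨key, fun hCp => ?_⟩
  have hγ_sq : γ ^ 2 = Cp ^ 2 * cos θ₀ ^ 2 := by
    have h := sq_mul_sin_add_of_mul_sin_add_eq_mul_sin_sub (C := Cp) (φ := θ₀ + Dp) (δ := θ₀)
      (sin_pos_of_pos_of_lt_pi hθ_pos (by linarith [pi_pos])).ne'
    rw [show θ₀ + Dp + θ₀ = 2 * θ₀ + Dp by ring, show θ₀ + Dp - θ₀ = Dp by ring, hγ, h4] at h
    simpa using h rfl
  have hμ_sq : μ ^ 2 = Cm ^ 2 * cos (2 * π / 3 - θ₀) ^ 2 := by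
    have h := sq_mul_sin_add_of_mul_sin_add_eq_mul_sin_sub (C := Cm) (φ := 2 * π / 3 + θ₀ + Dm)
      (δ := 2 * π / 3 - θ₀) (sin_pos_of_pos_of_lt_pi (by linarith) (by linarith [pi_pos])).ne'
    rw [show 2 * π / 3 + θ₀ + Dm + (2 * π / 3 - θ₀) = 4 * π / 3 + Dm by ring,
      show 2 * π / 3 + θ₀ + Dm - (2 * π / 3 - θ₀) = 2 * θ₀ + Dm by ring, hμ, h5] at h
    simpa using h rfl
  have hCm_sq : Cm ^ 2 ≤ (2 * μ) ^ 2 := by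
    rcases one_div_four_le_cos_sq_or_cos_two_pi_div_three_sub_sq hθ_pos.le hθ_lt.le with hcos | hcos
    · have hCp_le : |Cp| ≤ |2 * γ| := sq_le_sq.mp (by nlinarith)
      rw [abs_mul, abs_two] at hCp_le
      nlinarith [abs_nonneg γ, abs_nonneg μ]
    · nlinarith
  refine ⟨?_, by linarith⟩
  simpa [abs_mul] using sq_le_sq.mp hCm_sq
end
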